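/- arXiv:2404.16377 — 3 statements merged into one kernel-verified Lean document; each statement's English description precedes it below -/
import Mathlib

section
/- Let γ > 1 and B, S > 0 be real constants, 𝔱(ρ) := 2ρ²(B − ρ^{γ−1}S), ϱ_c := (2B/((γ+1)S))^{1/(γ−1)}, ϱ_m := (B/S)^{1/(γ−1)}, 𝔱_c := (γ−1)(2B/(γ+1))^{(γ+1)/(γ−1)} S^{−2/(γ−1)}, and let ρ̂ : [0, 𝔱_c] → [ϱ_c, ϱ_m] be the inverse of 𝔱 on [ϱ_c, ϱ_m], with g(t) := 1/ρ̂(t). Then: (i) 𝔱'(ρ) = (2/ρ)(𝔱(ρ) − (γ−1)ρ^{γ+1}S) for every ρ > 0; (ii) for every ε ∈ (0, 1) and every ρ ∈ [ϱ_c, ϱ_m] with 𝔱(ρ) ≤ (1 − ε/2)𝔱_c, one has 𝔱'(ρ) ≤ −ε𝔱_c/ρ; (iii) consequently, for every t ∈ [0, (1 − ε/2)𝔱_c], 0 < g'(t) ≤ g(t)/(ε𝔱_c). -/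
/-!
Beyond the critical density the derivative `𝔱'(ρ) = 2ρ(2B − (γ+1)ρ^{γ−1}S)` is negative, because
`ϱ_c^{γ−1} = 2B/((γ+1)S)`. Written as `𝔱'(ρ) = (2/ρ)(𝔱(ρ) − (γ−1)ρ^{γ+1}S)`, it is bounded using
`(γ−1)ρ^{γ+1}S ≥ (γ−1)ϱ_c^{γ+1}S = 𝔱_c` for `ρ ≥ ϱ_c`, which gives `𝔱' ≤ −ε𝔱_c/ρ` wherever
`𝔱 ≤ (1 − ε/2)𝔱_c`. As `𝔱` is continuous and injective on the compact interval `[ϱ_c, ϱ_m]`, its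
left inverse `ρ̂` is continuous, hence differentiable with `ρ̂' = 1/𝔱'(ρ̂)`, and
`g' = −1/(𝔱'(ρ̂) ρ̂²)` lies in `(0, g/(ε𝔱_c)]`.
-/

open Set Filter Topology

theorem IsCompact.continuousOn_of_leftInvOn {X Y : Type*} [TopologicalSpace X]
    [TopologicalSpace Y] [T2Space Y] {K : Set X} {s : Set Y} {f : X → Y} {g : Y → X}
    (hK : IsCompact K) (hf : ContinuousOn f K) (hinj : InjOn f K) (hg : MapsTo g s K)
    (hfg : LeftInvOn f g s) : ContinuousOn g s := by
  intro y hy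
  refine hK.tendsto_nhds_of_unique_mapClusterPt (eventually_mem_nhdsWithin.mono hg)
    fun x hx hcl => hinj hx (hg hy) ?_
  have hfx : MapClusterPt (f x) (𝓝[s] y) (f ∘ g) :=
    hcl.tendsto_comp' <| (hf x hx).mono_left <| inf_le_inf_left _ <|
      tendsto_principal.2 (eventually_mem_nhdsWithin.mono hg)
  have hid : MapClusterPt (f x) (𝓝[s] y) id :=
    hfx.congrFun (eventually_mem_nhdsWithin.mono hfg)
  rw [hfg hy]
  exact eq_of_nhds_neBot ((mapClusterPt_id_iff.1 hid).mono nhdsWithin_le_nhds).neBot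

theorem HasDerivWithinAt.of_local_left_inverse {𝕜 : Type*} [NontriviallyNormedField 𝕜]
    {f g : 𝕜 → 𝕜} {f' a : 𝕜} {s t : Set 𝕜} (hg : Tendsto g (𝓝[s] a) (𝓝[t] (g a)))
    (hf : HasDerivWithinAt f f' t (g a)) (hf' : f' ≠ 0) (ha : a ∈ s)
    (hfg : ∀ᶠ y in 𝓝[s] a, f (g y) = y) : HasDerivWithinAt g f'⁻¹ s a :=
  HasFDerivWithinAt.of_local_left_inverse
    (f' := ContinuousLinearEquiv.unitsEquivAut 𝕜 (Units.mk0 f' hf')) hg hf ha hfg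

noncomputable def momentumSq (γ B S ρ : ℝ) : ℝ := 2 * ρ ^ 2 * (B - ρ ^ (γ - 1) * S)

noncomputable def criticalDensity (γ B S : ℝ) : ℝ := (2 * B / ((γ + 1) * S)) ^ (1 / (γ - 1))

noncomputable def criticalMomentumSq (γ B S : ℝ) : ℝ :=
  (γ - 1) * (2 * B / (γ + 1)) ^ ((γ + 1) / (γ - 1)) * S ^ (-(2 / (γ - 1)))

section Momentum

variable {γ B S : ℝ}

theorem hasDerivAt_momentumSq {ρ : ℝ} (hρ : 0 < ρ) :
    HasDerivAt (momentumSq γ B S) (2 * ρ * (2 * B - (γ + 1) * ρ ^ (γ - 1) * S)) ρ := by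
  have hrpow := Real.hasDerivAt_rpow_const (p := γ - 1) (Or.inl hρ.ne')
  refine (((hasDerivAt_pow 2 ρ).const_mul 2).mul ((hrpow.mul_const S).const_sub B)).congr_deriv ?_
  rw [Real.rpow_sub_one hρ.ne' (γ - 1)]
  field_simp
  ring

theorem deriv_momentumSq {ρ : ℝ} (hρ : 0 < ρ) :
    deriv (momentumSq γ B S) ρ = 2 / ρ * (momentumSq γ B S ρ - (γ - 1) * ρ ^ (γ + 1) * S) := by
  rw [(hasDerivAt_momentumSq hρ).deriv, momentumSq,
    show γ + 1 = (γ - 1) + 2 by ring, Real.rpow_add hρ, Real.rpow_two]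
  field_simp
  ring

variable (hγ : 1 < γ) (hB : 0 < B) (hS : 0 < S)
include hγ hB hS

theorem criticalDensity_pos : 0 < criticalDensity γ B S := by
  unfold criticalDensity
  have : 0 < γ + 1 := by linarith
  positivity

theorem criticalDensity_rpow_sub_one :
    criticalDensity γ B S ^ (γ - 1) = 2 * B / ((γ + 1) * S) := by
  have : 0 < γ + 1 := by linarith
  rw [criticalDensity, ← Real.rpow_mul (by positivity),
    one_div_mul_cancel (by linarith : γ - 1 ≠ 0), Real.rpow_one]

theorem criticalMomentumSq_eq :
    criticalMomentumSq γ B S = (γ - 1) * criticalDensity γ B S ^ (γ + 1) * S := by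
  have hγ' : 0 < γ + 1 := by linarith
  have hexp : -(2 / (γ - 1)) = 1 - (γ + 1) / (γ - 1) := by
    field_simp [(by linarith : γ - 1 ≠ 0)]
    ring
  rw [criticalMomentumSq, criticalDensity, ← Real.rpow_mul (by positivity),
    one_div_mul_eq_div, ← div_div, Real.div_rpow (by positivity) hS.le, hexp,
    Real.rpow_sub hS, Real.rpow_one]
  field_simp

theorem criticalMomentumSq_pos : 0 < criticalMomentumSq γ B S := by
  rw [criticalMomentumSq_eq hγ hB hS]
  have := criticalDensity_pos hγ hB hS
  have : 0 < γ - 1 := by linarith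
  positivity

theorem strictAntiOn_momentumSq :
    StrictAntiOn (momentumSq γ B S) (Ici (criticalDensity γ B S)) := by
  have hc := criticalDensity_pos hγ hB hS
  refine strictAntiOn_of_deriv_neg (convex_Ici _)
    (fun x hx => (hasDerivAt_momentumSq (hc.trans_le hx)).continuousAt.continuousWithinAt)
    fun x hx => ?_
  rw [interior_Ici] at hx
  have hx0 : 0 < x := hc.trans hx
  have hpow : 2 * B / ((γ + 1) * S) < x ^ (γ - 1) := by
    rw [← criticalDensity_rpow_sub_one hγ hB hS]
    exact Real.rpow_lt_rpow hc.le hx (by linarith)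
  rw [div_lt_iff₀ (by nlinarith)] at hpow
  rw [(hasDerivAt_momentumSq hx0).deriv]
  nlinarith

theorem deriv_momentumSq_le {ε ρ : ℝ} (hρ : criticalDensity γ B S ≤ ρ)
    (hle : momentumSq γ B S ρ ≤ (1 - ε / 2) * criticalMomentumSq γ B S) :
    deriv (momentumSq γ B S) ρ ≤ -(ε * criticalMomentumSq γ B S) / ρ := by
  have hc := criticalDensity_pos hγ hB hS
  have hρ0 : 0 < ρ := hc.trans_le hρ
  have hcrit : criticalMomentumSq γ B S ≤ (γ - 1) * ρ ^ (γ + 1) * S := by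
    rw [criticalMomentumSq_eq hγ hB hS]
    gcongr
  calc deriv (momentumSq γ B S) ρ
      = 2 / ρ * (momentumSq γ B S ρ - (γ - 1) * ρ ^ (γ + 1) * S) := deriv_momentumSq hρ0
    _ ≤ 2 / ρ * -(ε / 2 * criticalMomentumSq γ B S) := by gcongr; linarith
    _ = -(ε * criticalMomentumSq γ B S) / ρ := by ring

end Momentum

theorem inv_div_sq_le_of_le_neg_div {D ρ c : ℝ} (hρ : 0 < ρ) (hc : 0 < c) (hD : D ≤ -c / ρ) :
    -D⁻¹ / ρ ^ 2 ≤ 1 / ρ / c := by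
  have hcD : c / ρ ≤ -D := by rw [neg_div] at hD; linarith
  calc -D⁻¹ / ρ ^ 2 = (-D)⁻¹ / ρ ^ 2 := by rw [inv_neg]
    _ ≤ (c / ρ)⁻¹ / ρ ^ 2 := by gcongr
    _ = 1 / ρ / c := by field_simp

section Inverse

variable {γ B S : ℝ} (hγ : 1 < γ) (hB : 0 < B) (hS : 0 < S)
include hγ hB hS

theorem hasDerivWithinAt_of_leftInvOn_momentumSq {rm : ℝ} {r : ℝ → ℝ}
    (hmap : MapsTo r (Icc 0 (criticalMomentumSq γ B S)) (Icc (criticalDensity γ B S) rm))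
    (hinv : LeftInvOn (momentumSq γ B S) r (Icc 0 (criticalMomentumSq γ B S)))
    {s : ℝ} (hs : s ∈ Icc 0 (criticalMomentumSq γ B S))
    (hD : deriv (momentumSq γ B S) (r s) ≠ 0) :
    HasDerivWithinAt r (deriv (momentumSq γ B S) (r s))⁻¹ (Icc 0 (criticalMomentumSq γ B S)) s := by
  have hc := criticalDensity_pos hγ hB hS
  have hcont : ContinuousOn r (Icc 0 (criticalMomentumSq γ B S)) :=
    isCompact_Icc.continuousOn_of_leftInvOn
      (fun x hx => (hasDerivAt_momentumSq (hc.trans_le hx.1)).continuousAt.continuousWithinAt)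
      ((strictAntiOn_momentumSq hγ hB hS).injOn.mono Icc_subset_Ici_self) hmap hinv
  have hdiff : HasDerivAt (momentumSq γ B S) (deriv (momentumSq γ B S) (r s)) (r s) :=
    (hasDerivAt_momentumSq (hc.trans_le (hmap hs).1)).differentiableAt.hasDerivAt
  exact .of_local_left_inverse (t := univ) (by rw [nhdsWithin_univ]; exact hcont s hs)
    hdiff.hasDerivWithinAt hD hs (eventually_mem_nhdsWithin.mono hinv)

theorem derivWithin_one_div_inverse_momentumSq {rm ε : ℝ} (hε : 0 < ε) {r : ℝ → ℝ}
    (hmap : MapsTo r (Icc 0 (criticalMomentumSq γ B S)) (Icc (criticalDensity γ B S) rm))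
    (hinv : LeftInvOn (momentumSq γ B S) r (Icc 0 (criticalMomentumSq γ B S)))
    {s : ℝ} (hs : s ∈ Icc 0 ((1 - ε / 2) * criticalMomentumSq γ B S)) :
    0 < derivWithin (fun u => 1 / r u) (Icc 0 (criticalMomentumSq γ B S)) s ∧
      derivWithin (fun u => 1 / r u) (Icc 0 (criticalMomentumSq γ B S)) s
        ≤ 1 / r s / (ε * criticalMomentumSq γ B S) := by
  set tc := criticalMomentumSq γ B S
  set D := deriv (momentumSq γ B S) (r s)
  have htc : 0 < tc := criticalMomentumSq_pos hγ hB hS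
  have hs' : s ∈ Icc 0 tc := ⟨hs.1, hs.2.trans (by nlinarith)⟩
  have hρ : criticalDensity γ B S ≤ r s := (hmap hs').1
  have hρ0 : 0 < r s := (criticalDensity_pos hγ hB hS).trans_le hρ
  have hDle : D ≤ -(ε * tc) / r s :=
    deriv_momentumSq_le hγ hB hS hρ (by rw [hinv hs']; exact hs.2)
  have hDneg : D < 0 := hDle.trans_lt (div_neg_of_neg_of_pos (by nlinarith) hρ0)
  have hr := hasDerivWithinAt_of_leftInvOn_momentumSq hγ hB hS hmap hinv hs' hDneg.ne
  have hg : HasDerivWithinAt (fun u => 1 / r u) (-D⁻¹ / r s ^ 2) (Icc 0 tc) s :=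
    ((hasDerivWithinAt_const s _ 1).div hr hρ0.ne').congr_deriv (by ring)
  rw [hg.derivWithin (uniqueDiffOn_Icc htc s hs')]
  have := inv_lt_zero.2 hDneg
  exact ⟨div_pos (by linarith) (by positivity),
    inv_div_sq_le_of_le_neg_div hρ0 (by positivity) hDle⟩

end Inverse

theorem stmt_8_general (γ B S : ℝ) (hγ : 1 < γ) (hB : 0 < B) (hS : 0 < S)
    (t : ℝ → ℝ) (ht : ∀ ρ : ℝ, t ρ = 2 * ρ ^ 2 * (B - ρ ^ (γ - 1) * S))
    (rc rm tc : ℝ)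
    (hrc : rc = (2 * B / ((γ + 1) * S)) ^ (1 / (γ - 1)))
    (htc : tc = (γ - 1) * (2 * B / (γ + 1)) ^ ((γ + 1) / (γ - 1)) * S ^ (-(2 / (γ - 1))))
    (r : ℝ → ℝ) (hmap : Set.MapsTo r (Set.Icc 0 tc) (Set.Icc rc rm))
    (hinv : ∀ s ∈ Set.Icc 0 tc, t (r s) = s)
    (g : ℝ → ℝ) (hg : ∀ s, g s = 1 / r s) :
    (∀ ρ : ℝ, 0 < ρ →
        deriv t ρ = 2 / ρ * (t ρ - (γ - 1) * ρ ^ (γ + 1) * S)) ∧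
      ∀ ε : ℝ, 0 < ε → ε < 1 →
        (∀ ρ ∈ Set.Icc rc rm, t ρ ≤ (1 - ε / 2) * tc → deriv t ρ ≤ -(ε * tc) / ρ) ∧
        ∀ s ∈ Set.Icc 0 ((1 - ε / 2) * tc),
          0 < derivWithin g (Set.Icc 0 tc) s ∧
            derivWithin g (Set.Icc 0 tc) s ≤ g s / (ε * tc) := by
  obtain rfl : t = momentumSq γ B S := funext ht
  obtain rfl : g = fun s => 1 / r s := funext hg
  obtain rfl : rc = criticalDensity γ B S := hrc
  obtain rfl : tc = criticalMomentumSq γ B S := htc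
  exact ⟨fun ρ hρ => deriv_momentumSq hρ, fun ε hε _ =>
    ⟨fun ρ hρ hle => deriv_momentumSq_le hγ hB hS hρ.1 hle,
      fun s hs => derivWithin_one_div_inverse_momentumSq hγ hB hS hε hmap hinv hs⟩⟩

/-- Quantitative ellipticity bound (2.49): with
`𝔱(ρ) = 2ρ²(B − ρ^{γ−1}S)`, its inverse `ρ̂` on `[ϱ_c, ϱ_m]` and `g = 1/ρ̂`:
(i) `𝔱'(ρ) = (2/ρ)(𝔱(ρ) − (γ−1)ρ^{γ+1}S)` for `ρ > 0`;
(ii) for `ε ∈ (0,1)` and `ρ ∈ [ϱ_c, ϱ_m]` with `𝔱(ρ) ≤ (1 − ε/2)𝔱_c`,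
`𝔱'(ρ) ≤ −ε𝔱_c/ρ`; (iii) hence `0 < g'(t) ≤ g(t)/(ε𝔱_c)` on `[0, (1 − ε/2)𝔱_c]`. -/
theorem stmt_8 (γ B S : ℝ) (hγ : 1 < γ) (hB : 0 < B) (hS : 0 < S)
    (t : ℝ → ℝ) (ht : ∀ ρ : ℝ, t ρ = 2 * ρ ^ 2 * (B - ρ ^ (γ - 1) * S))
    (rc rm tc : ℝ)
    (hrc : rc = (2 * B / ((γ + 1) * S)) ^ (1 / (γ - 1)))
    (hrm : rm = (B / S) ^ (1 / (γ - 1)))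
    (htc : tc = (γ - 1) * (2 * B / (γ + 1)) ^ ((γ + 1) / (γ - 1)) * S ^ (-(2 / (γ - 1))))
    (r : ℝ → ℝ) (hmap : Set.MapsTo r (Set.Icc 0 tc) (Set.Icc rc rm))
    (hinv : ∀ s ∈ Set.Icc 0 tc, t (r s) = s)
    (g : ℝ → ℝ) (hg : ∀ s, g s = 1 / r s) :
    (∀ ρ : ℝ, 0 < ρ →
        deriv t ρ = 2 / ρ * (t ρ - (γ - 1) * ρ ^ (γ + 1) * S)) ∧
      ∀ ε : ℝ, 0 < ε → ε < 1 →
        (∀ ρ ∈ Set.Icc rc rm, t ρ ≤ (1 - ε / 2) * tc → deriv t ρ ≤ -(ε * tc) / ρ) ∧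
        ∀ s ∈ Set.Icc 0 ((1 - ε / 2) * tc),
          0 < derivWithin g (Set.Icc 0 tc) s ∧
            derivWithin g (Set.Icc 0 tc) s ≤ g s / (ε * tc) :=
  stmt_8_general γ B S hγ hB hS t ht rc rm tc hrc htc r hmap hinv g hg
end

section
/- Let ε ∈ (0, 1/4), T > 0 and g* > 0. Let g : [0, ∞) → ℝ be continuously differentiable with 0 < g(t) ≤ g* for all t ≥ 0, and with 0 ≤ g'(t) ≤ g(t)/(εT) for all t ≤ (1 − ε/2)T. Let ϖ : ℝ → [0, 1] be continuously differentiable and nonincreasing, with ϖ(s) = 0 for s ≥ 1 − ε/2 and |ϖ'(s)| ≤ 8/ε for all s. Define g_ε(t) := g(t) ϖ(t/T) + (1 − ϖ(t/T)) g*. Then for all t ≥ 0: 0 ≤ g_ε'(t) ≤ 9g*/(εT); g_ε'(t) = 0 whenever t > (1 − ε/2)T; and 0 ≤ t g_ε'(t) ≤ 9g*/ε. -/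
open Set

/-!
Write `w(t) = ϖ(t/T)`, so that `g_ε = g w + (1 - w) g*` and `g_ε' = g' w + (g - g*) w'`.
Both terms are nonnegative because `g' ≥ 0`, `w ≥ 0`, `g ≤ g*` and `w' ≤ 0` (`ϖ` is antitone);
the first is at most `g/(εT) ≤ g*/(εT)` and the second at most `g* · 8/(εT)`. Beyond
`(1 - ε/2)T` the cutoff vanishes, so `g_ε ≡ g*` there and `g_ε' = 0`; below it `t ≤ T`,
which turns the bound on `g_ε'` into the bound on `t g_ε'`.
-/

theorem HasDerivAt.mul_add_one_sub_mul_const {f w : ℝ → ℝ} {f' w' x : ℝ} (c : ℝ)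
    (hf : HasDerivAt f f' x) (hw : HasDerivAt w w' x) :
    HasDerivAt (fun u => f u * w u + (1 - w u) * c) (f' * w x + (f x - c) * w') x :=
  ((hf.mul hw).add ((hw.const_sub 1).mul_const c)).congr_deriv (by ring)

theorem hasDerivAt_truncation {g ϖ : ℝ → ℝ} {g' ϖ' t : ℝ} (T c : ℝ)
    (hg : HasDerivAt g g' t) (hϖ : HasDerivAt ϖ ϖ' (t / T)) :
    HasDerivAt (fun u => g u * ϖ (u / T) + (1 - ϖ (u / T)) * c)
      (g' * ϖ (t / T) + (g t - c) * ϖ' / T) t := by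
  have hw : HasDerivAt (fun u => ϖ (u / T)) (ϖ' * (1 / T)) t :=
    hϖ.comp t ((hasDerivAt_id t).div_const T)
  exact (hg.mul_add_one_sub_mul_const c hw).congr_deriv (by ring)

theorem deriv_truncation_eq_zero {g ϖ : ℝ → ℝ} {T s₀ t : ℝ} (c : ℝ) (hT : 0 < T)
    (hϖ : ∀ s, s₀ ≤ s → ϖ s = 0) (ht : s₀ * T < t) :
    deriv (fun u => g u * ϖ (u / T) + (1 - ϖ (u / T)) * c) t = 0 := by
  have hconst : (fun u => g u * ϖ (u / T) + (1 - ϖ (u / T)) * c) =ᶠ[nhds t] fun _ => c := by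
    filter_upwards [Ioi_mem_nhds ht] with u hu
    rw [hϖ _ ((le_div_iff₀ hT).mpr hu.le)]
    ring
  rw [hconst.deriv_eq, deriv_const]

theorem truncation_slope_bounds {ε T K c G G' a b : ℝ} (hε : 0 < ε) (hT : 0 < T)
    (ha : a ∈ Icc 0 1) (hb : b ≤ 0) (hb' : |b| ≤ K / ε)
    (hG : 0 ≤ G) (hGc : G ≤ c) (hG' : 0 ≤ G') (hG'G : G' ≤ G / (ε * T)) :
    0 ≤ G' * a + (G - c) * b / T ∧ G' * a + (G - c) * b / T ≤ (1 + K) * c / (ε * T) := by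
  have hslope : (G - c) * b / T = (c - G) * |b| / T := by
    rw [abs_of_nonpos hb]
    ring
  have hfirst : G' * a ≤ c / (ε * T) :=
    calc G' * a ≤ G' := mul_le_of_le_one_right hG' ha.2
      _ ≤ G / (ε * T) := hG'G
      _ ≤ c / (ε * T) := by gcongr
  have hsecond : (c - G) * |b| / T ≤ K * c / (ε * T) :=
    calc (c - G) * |b| / T ≤ c * (K / ε) / T := by
          gcongr
          · exact hG.trans hGc
          · exact sub_le_self c hG
      _ = K * c / (ε * T) := by field_simp
  rw [hslope]
  constructor
  · have hcG : 0 ≤ c - G := sub_nonneg.mpr hGc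
    have ha₀ : 0 ≤ a := ha.1
    positivity
  · calc G' * a + (c - G) * |b| / T ≤ c / (ε * T) + K * c / (ε * T) := add_le_add hfirst hsecond
      _ = (1 + K) * c / (ε * T) := by ring

theorem stmt_14_general (ε T gs : ℝ) (hε : 0 < ε)
    (hT : 0 < T) (hgs : 0 < gs)
    (g g' ϖ ϖ' : ℝ → ℝ)
    (hgd : ∀ t : ℝ, 0 ≤ t → HasDerivAt g (g' t) t)
    (hgpos : ∀ t : ℝ, 0 ≤ t → 0 < g t) (hgub : ∀ t : ℝ, 0 ≤ t → g t ≤ gs)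
    (hg'b : ∀ t : ℝ, 0 ≤ t → t ≤ (1 - ε / 2) * T → 0 ≤ g' t ∧ g' t ≤ g t / (ε * T))
    (hϖd : ∀ s : ℝ, HasDerivAt ϖ (ϖ' s) s)
    (hϖ01 : ∀ s : ℝ, ϖ s ∈ Set.Icc (0:ℝ) 1) (hϖanti : Antitone ϖ)
    (hϖ0 : ∀ s : ℝ, 1 - ε / 2 ≤ s → ϖ s = 0)
    (hϖ'b : ∀ s : ℝ, |ϖ' s| ≤ 8 / ε)
    (gε : ℝ → ℝ)
    (hgε : ∀ t : ℝ, gε t = g t * ϖ (t / T) + (1 - ϖ (t / T)) * gs) :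
    ∀ t : ℝ, 0 ≤ t →
      0 ≤ deriv gε t ∧ deriv gε t ≤ 9 * gs / (ε * T) ∧
      ((1 - ε / 2) * T < t → deriv gε t = 0) ∧
      0 ≤ t * deriv gε t ∧ t * deriv gε t ≤ 9 * gs / ε := by
  obtain rfl : gε = fun u => g u * ϖ (u / T) + (1 - ϖ (u / T)) * gs := funext hgε
  intro t ht
  rcases le_or_gt t ((1 - ε / 2) * T) with hle | hgt
  · have hϖ'nonpos : ϖ' (t / T) ≤ 0 := (hϖd _).deriv ▸ hϖanti.deriv_nonpos
    rw [(hasDerivAt_truncation T gs (hgd t ht) (hϖd (t / T))).deriv]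
    obtain ⟨hnonneg, hle9⟩ := truncation_slope_bounds hε hT (hϖ01 _) hϖ'nonpos (hϖ'b _)
      (hgpos t ht).le (hgub t ht) (hg'b t ht hle).1 (hg'b t ht hle).2
    norm_num at hle9
    have htT : t ≤ T := hle.trans (mul_le_of_le_one_left hT.le (sub_le_self 1 (by positivity)))
    refine ⟨hnonneg, hle9, fun h => absurd h hle.not_gt, mul_nonneg ht hnonneg, ?_⟩
    calc t * _ ≤ T * (9 * gs / (ε * T)) := mul_le_mul htT hle9 hnonneg hT.le
      _ = 9 * gs / ε := by field_simp
  · rw [deriv_truncation_eq_zero gs hT hϖ0 hgt, mul_zero]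
    exact ⟨le_rfl, by positivity, fun _ => rfl, le_rfl, by positivity⟩

/-- Subsonic truncation (Lemma 2.6, (2.50)–(2.51)): with
`g_ε(t) = g(t)ϖ(t/T) + (1 − ϖ(t/T))g*`, for all `t ≥ 0` one has
`0 ≤ g_ε'(t) ≤ 9g*/(εT)`, `g_ε'(t) = 0` whenever `t > (1 − ε/2)T`, and
`0 ≤ t·g_ε'(t) ≤ 9g*/ε`. -/
theorem stmt_14 (ε T gs : ℝ) (hε : 0 < ε) (hε' : ε < 1 / 4)
    (hT : 0 < T) (hgs : 0 < gs)
    (g g' ϖ ϖ' : ℝ → ℝ)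
    (hgd : ∀ t : ℝ, 0 ≤ t → HasDerivAt g (g' t) t)
    (hg'c : ContinuousOn g' (Set.Ici 0))
    (hgpos : ∀ t : ℝ, 0 ≤ t → 0 < g t) (hgub : ∀ t : ℝ, 0 ≤ t → g t ≤ gs)
    (hg'b : ∀ t : ℝ, 0 ≤ t → t ≤ (1 - ε / 2) * T → 0 ≤ g' t ∧ g' t ≤ g t / (ε * T))
    (hϖd : ∀ s : ℝ, HasDerivAt ϖ (ϖ' s) s) (hϖ'c : Continuous ϖ')
    (hϖ01 : ∀ s : ℝ, ϖ s ∈ Set.Icc (0:ℝ) 1) (hϖanti : Antitone ϖ)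
    (hϖ0 : ∀ s : ℝ, 1 - ε / 2 ≤ s → ϖ s = 0)
    (hϖ'b : ∀ s : ℝ, |ϖ' s| ≤ 8 / ε)
    (gε : ℝ → ℝ)
    (hgε : ∀ t : ℝ, gε t = g t * ϖ (t / T) + (1 - ϖ (t / T)) * gs) :
    ∀ t : ℝ, 0 ≤ t →
      0 ≤ deriv gε t ∧ deriv gε t ≤ 9 * gs / (ε * T) ∧
      ((1 - ε / 2) * T < t → deriv gε t = 0) ∧
      0 ≤ t * deriv gε t ∧ t * deriv gε t ≤ 9 * gs / ε :=
  stmt_14_general ε T gs hε hT hgs g g' ϖ ϖ' hgd hgpos hgub hg'b hϖd hϖ01 hϖanti hϖ0 hϖ'b gε hgε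
end

section
/- Let Q > 0, b > 0 and κ ≥ 0. Let 𝒢 : ℝ² × ℝ → ℝ be such that: for each z ∈ ℝ, p ↦ 𝒢(p, z) is twice continuously differentiable with ∇_p 𝒢(0, z) = 0 and ξ · (D_p² 𝒢(p, z)) ξ ≥ b|ξ|² for all p, ξ ∈ ℝ²; for each p ∈ ℝ², z ↦ 𝒢(p, z) is differentiable with |∂_z 𝒢(p, z)| ≤ κ for all z, ∂_z 𝒢(p, z) = 0 for all z ≤ 0, and ∂_z 𝒢(p, z) ≥ 0 for all z ≥ Q; and 𝒢(0, Q) = 0. Then for all (p, z) ∈ ℝ² × ℝ: 𝒢(p, z) ≥ (b/2)|p|² − κ · min{Q, max(Q − z, 0)}. -/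
/-!
Restricting `𝒢(·, z)` to the segment from `0` to `p`, a second derivative `≥ b|p|²` and a vanishing
first derivative at `0` give `𝒢(p, z) ≥ 𝒢(0, z) + (b/2)|p|²`. In `z`, the bounds on `∂_z𝒢` compare
`𝒢(0, z)` with `𝒢(0, Q) = 0`: for `z ≥ Q` it is monotone, on `[0, Q]` it is `κ`-Lipschitz, and for
`z ≤ 0` it is constant, so the loss is at most `κ` times the length of `[max z 0, Q]`.
-/

open Set

lemma add_half_le_of_le_deriv_deriv {φ φ' φ'' : ℝ → ℝ} {c : ℝ}
    (hφ : ∀ t, HasDerivAt φ (φ' t) t) (hφ' : ∀ t, HasDerivAt φ' (φ'' t) t)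
    (hc : ∀ t, c ≤ φ'' t) (h0 : φ' 0 = 0) : φ 0 + c / 2 ≤ φ 1 := by
  have hslope : ∀ t, 0 ≤ t → c * t ≤ φ' t := fun t ht => by
    simpa [h0] using mul_sub_le_image_sub_of_le_deriv (fun s => (hφ' s).differentiableAt)
      (fun s => (hφ' s).deriv ▸ hc s) ht
  have hχ : ∀ t, HasDerivAt (fun s => φ s - c / 2 * s ^ 2) (φ' t - c * t) t := fun t => by
    refine ((hφ t).sub ((hasDerivAt_pow 2 t).const_mul (c / 2))).congr_deriv ?_
    norm_num
    ring
  have hmono := (convex_Ici (0 : ℝ)).mul_sub_le_image_sub_of_le_deriv (C := 0)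
    (fun t _ => (hχ t).continuousAt.continuousWithinAt)
    (fun t _ => (hχ t).differentiableAt.differentiableWithinAt)
    (fun t ht => by
      rw [interior_Ici] at ht
      rw [(hχ t).deriv, sub_nonneg]
      exact hslope t (le_of_lt ht))
    0 self_mem_Ici 1 (mem_Ici.2 zero_le_one) zero_le_one
  linarith

lemma add_half_le_of_le_fderiv_fderiv {E : Type*} [NormedAddCommGroup E] [NormedSpace ℝ E]
    {f : E → ℝ} (hf : ContDiff ℝ 2 f) (h0 : fderiv ℝ f 0 = 0) {v : E} {c : ℝ}
    (hc : ∀ t : ℝ, c ≤ fderiv ℝ (fun q => fderiv ℝ f q v) (t • v) v) : f 0 + c / 2 ≤ f v := by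
  have hline : ∀ t : ℝ, HasDerivAt (fun s : ℝ => s • v) v t := fun t => by
    simpa using (hasDerivAt_id t).smul_const v
  have hdf : Differentiable ℝ (fun q => fderiv ℝ f q v) :=
    ((hf.fderiv_right le_rfl).differentiable one_ne_zero).clm_apply (differentiable_const v)
  have key := add_half_le_of_le_deriv_deriv (φ := fun t : ℝ => f (t • v))
    (φ' := fun t => fderiv ℝ f (t • v) v)
    (φ'' := fun t => fderiv ℝ (fun q => fderiv ℝ f q v) (t • v) v)
    (fun t => ((hf.differentiable two_ne_zero) (t • v)).hasFDerivAt.comp_hasDerivAt t (hline t))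
    (fun t => HasFDerivAt.comp_hasDerivAt (l := fun q => fderiv ℝ f q v) t
      (hdf (t • v)).hasFDerivAt (hline t)) hc (by simp [h0])
  simpa using key

lemma sub_mul_min_le_of_hasDerivAt {g g' : ℝ → ℝ} {Q κ : ℝ} (hQ : 0 < Q)
    (hg : ∀ z, HasDerivAt g (g' z) z) (hle : ∀ z, g' z ≤ κ) (hneg : ∀ z ≤ 0, g' z ≤ 0)
    (hpos : ∀ z, Q ≤ z → 0 ≤ g' z) (z : ℝ) : g Q - κ * min Q (max (Q - z) 0) ≤ g z := by
  have hdiff : Differentiable ℝ g := fun z => (hg z).differentiableAt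
  have hlip : ∀ w ≤ Q, g Q - g w ≤ κ * (Q - w) :=
    fun w hw => image_sub_le_mul_sub_of_deriv_le hdiff (fun z => (hg z).deriv ▸ hle z) hw
  rcases le_or_gt Q z with hQz | hzQ
  · have hmono := (convex_Ici Q).mul_sub_le_image_sub_of_le_deriv (C := 0)
      hdiff.continuous.continuousOn hdiff.differentiableOn
      (fun w hw => by
        rw [interior_Ici] at hw
        exact (hg w).deriv ▸ hpos w (le_of_lt hw))
      Q self_mem_Ici z hQz hQz
    rw [max_eq_right (sub_nonpos.2 hQz), min_eq_right hQ.le, mul_zero, sub_zero]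
    linarith
  rcases le_or_gt 0 z with hz | hz
  · rw [max_eq_left (by linarith), min_eq_right (by linarith)]
    linarith [hlip z hzQ.le]
  · have hflat := (convex_Iic (0 : ℝ)).image_sub_le_mul_sub_of_deriv_le (C := 0)
      hdiff.continuous.continuousOn hdiff.differentiableOn
      (fun w hw => by
        rw [interior_Iic] at hw
        exact (hg w).deriv ▸ hneg w (le_of_lt hw))
      z hz.le 0 self_mem_Iic hz.le
    rw [max_eq_left (by linarith), min_eq_left (by linarith)]
    linarith [hlip 0 hQ.le]

theorem stmt_15_general (Q b κ : ℝ) (hQ : 0 < Q)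
    (G Gz : ℝ × ℝ → ℝ → ℝ)
    (hC2 : ∀ z : ℝ, ContDiff ℝ 2 (fun p => G p z))
    (hgrad0 : ∀ z : ℝ, fderiv ℝ (fun p => G p z) 0 = 0)
    (hconv : ∀ z : ℝ, ∀ p ξ : ℝ × ℝ,
      b * (ξ.1 ^ 2 + ξ.2 ^ 2)
        ≤ fderiv ℝ (fun q => fderiv ℝ (fun r => G r z) q ξ) p ξ)
    (hzd : ∀ (p : ℝ × ℝ) (z : ℝ), HasDerivAt (fun w => G p w) (Gz p z) z)
    (hzb : ∀ (p : ℝ × ℝ) (z : ℝ), |Gz p z| ≤ κ)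
    (hz0 : ∀ (p : ℝ × ℝ) (z : ℝ), z ≤ 0 → Gz p z = 0)
    (hzQ : ∀ (p : ℝ × ℝ) (z : ℝ), Q ≤ z → 0 ≤ Gz p z)
    (hGQ : G 0 Q = 0) :
    ∀ (p : ℝ × ℝ) (z : ℝ),
      b / 2 * (p.1 ^ 2 + p.2 ^ 2) - κ * min Q (max (Q - z) 0) ≤ G p z := by
  intro p z
  have hz : -(κ * min Q (max (Q - z) 0)) ≤ G 0 z := by
    simpa [hGQ] using sub_mul_min_le_of_hasDerivAt hQ (hzd 0)
      (fun w => (le_abs_self _).trans (hzb 0 w)) (fun w hw => (hz0 0 w hw).le) (hzQ 0) z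
  have hp : G 0 z + b * (p.1 ^ 2 + p.2 ^ 2) / 2 ≤ G p z :=
    add_half_le_of_le_fderiv_fderiv (hC2 z) (hgrad0 z) fun t => hconv z (t • p) p
  linarith

/-- Abstract coercivity estimate (3.19): if `p ↦ 𝒢(p,z)` is
`C²` with vanishing gradient at `p = 0` and Hessian `≥ b`, and `z ↦ 𝒢(p,z)` is
differentiable with `|∂_z𝒢| ≤ κ`, `∂_z𝒢 = 0` for `z ≤ 0`, `∂_z𝒢 ≥ 0` for
`z ≥ Q`, and `𝒢(0,Q) = 0`, then
`𝒢(p,z) ≥ (b/2)|p|² − κ·min{Q, max(Q − z, 0)}`. -/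
theorem stmt_15 (Q b κ : ℝ) (hQ : 0 < Q) (hb : 0 < b) (hκ : 0 ≤ κ)
    (G Gz : ℝ × ℝ → ℝ → ℝ)
    (hC2 : ∀ z : ℝ, ContDiff ℝ 2 (fun p => G p z))
    (hgrad0 : ∀ z : ℝ, fderiv ℝ (fun p => G p z) 0 = 0)
    (hconv : ∀ z : ℝ, ∀ p ξ : ℝ × ℝ,
      b * (ξ.1 ^ 2 + ξ.2 ^ 2)
        ≤ fderiv ℝ (fun q => fderiv ℝ (fun r => G r z) q ξ) p ξ)
    (hzd : ∀ (p : ℝ × ℝ) (z : ℝ), HasDerivAt (fun w => G p w) (Gz p z) z)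
    (hzb : ∀ (p : ℝ × ℝ) (z : ℝ), |Gz p z| ≤ κ)
    (hz0 : ∀ (p : ℝ × ℝ) (z : ℝ), z ≤ 0 → Gz p z = 0)
    (hzQ : ∀ (p : ℝ × ℝ) (z : ℝ), Q ≤ z → 0 ≤ Gz p z)
    (hGQ : G 0 Q = 0) :
    ∀ (p : ℝ × ℝ) (z : ℝ),
      b / 2 * (p.1 ^ 2 + p.2 ^ 2) - κ * min Q (max (Q - z) 0) ≤ G p z :=
  stmt_15_general Q b κ hQ G Gz hC2 hgrad0 hconv hzd hzb hz0 hzQ hGQ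
end
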